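/- arXiv:2002.09092 — 5 statements merged into one kernel-verified Lean document; each statement's English description precedes it below -/
import Mathlib

section
/- Let m ≥ 1 and k ≥ 2 be integers and let H be any graph obtained from the complete bipartite graph K_{m,m+k} with parts A (|A| = m) and B (|B| = m+k) by adding an arbitrary set of edges inside A. Then H has no spanning tree with at most k leaves. -/
open SimpleGraph

/-- `G` has a spanning tree with at most `k` leaves. -/
def SimpleGraph.HasSpanningKEndedTree {V : Type*} (G : SimpleGraph V) (k : ℕ) : Prop :=
  ∃ T : SimpleGraph V, T ≤ G ∧ T.IsTree ∧ {x : V | (T.neighborSet x).ncard = 1}.ncard ≤ k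

theorem stmt_3 {V : Type*} [Fintype V] (H : SimpleGraph V) (m k : ℕ)
    (hm : 1 ≤ m) (hk : 2 ≤ k) (A B : Set V)
    (hdisj : Disjoint A B) (hunion : A ∪ B = Set.univ)
    (hA : A.ncard = m) (hB : B.ncard = m + k)
    (hAB : ∀ a ∈ A, ∀ b ∈ B, H.Adj a b)
    (hBB : ∀ b ∈ B, ∀ b' ∈ B, ¬H.Adj b b') :
    ¬H.HasSpanningKEndedTree k := by
  classical
  rintro ⟨T, hTH, hTree, hleaves⟩
  have hAf : A.toFinset.card = m := by rw [← Set.ncard_eq_toFinset_card']; exact hA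
  have hBf : B.toFinset.card = m + k := by rw [← Set.ncard_eq_toFinset_card']; exact hB
  have hdisjF : Disjoint A.toFinset B.toFinset := by
    simpa [Finset.disjoint_left, Set.disjoint_left] using hdisj
  have hunionF : A.toFinset ∪ B.toFinset = Finset.univ := by
    ext x
    have : x ∈ A ∪ B := hunion ▸ Set.mem_univ x
    simpa using this
  have hcardV : Fintype.card V = 2 * m + k := by
    have := Finset.card_union_of_disjoint hdisjF
    rw [hunionF, Finset.card_univ, hAf, hBf] at this
    omega
  have hdeg : ∀ x, (T.neighborSet x).ncard = T.degree x := fun x => by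
    rw [Set.ncard_eq_toFinset_card']; rfl
  -- neighbors of B-vertices lie in A
  have hnbA : ∀ b ∈ B, T.neighborFinset b ⊆ A.toFinset := by
    intro b hb a ha
    rw [mem_neighborFinset] at ha
    have hH : H.Adj b a := hTH ha
    have : a ∈ A ∪ B := hunion ▸ Set.mem_univ a
    rcases this with h | h
    · simpa using h
    · exact absurd hH (hBB b hb a h)
  -- sum of B degrees ≤ sum of A degrees
  have key : ∑ b ∈ B.toFinset, T.degree b ≤ ∑ a ∈ A.toFinset, T.degree a := by
    have h1 : ∀ b ∈ B.toFinset, T.degree b = ∑ a ∈ A.toFinset, if T.Adj b a then 1 else 0 := by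
      intro b hb
      rw [← Finset.card_filter]
      have : A.toFinset.filter (fun a => T.Adj b a) = T.neighborFinset b := by
        ext a
        simp only [Finset.mem_filter, mem_neighborFinset]
        exact ⟨fun h => h.2, fun h => ⟨hnbA b (by simpa using hb) (by rwa [mem_neighborFinset]), h⟩⟩
      rw [this]; rfl
    rw [Finset.sum_congr rfl h1, Finset.sum_comm]
    apply Finset.sum_le_sum
    intro a ha
    rw [← Finset.card_filter]
    have : B.toFinset.filter (fun b => T.Adj b a) ⊆ T.neighborFinset a := by
      intro b hb
      rw [mem_neighborFinset]
      exact (Finset.mem_filter.1 hb).2.symm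
    exact Finset.card_le_card this
  -- total degree sum
  have htot : ∑ a ∈ A.toFinset, T.degree a + ∑ b ∈ B.toFinset, T.degree b = 2 * (2 * m + k - 1) := by
    rw [← Finset.sum_union hdisjF, hunionF]
    have h2 := T.sum_degrees_eq_twice_card_edges
    have h3 := hTree.card_edgeFinset
    rw [hcardV] at h3
    omega
  -- each B vertex has degree ≥ 1
  have hdeg1 : ∀ b ∈ B, 1 ≤ T.degree b := by
    intro b hb
    by_contra h
    have hd0 : T.degree b = 0 := by omega
    obtain ⟨a, ha⟩ := Set.nonempty_of_ncard_ne_zero (by rw [hA]; omega : A.ncard ≠ 0)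
    have hne : a ≠ b := fun h => (Set.disjoint_left.1 hdisj (h ▸ ha)) hb
    obtain ⟨w⟩ := hTree.isConnected.preconnected b a
    cases w with
    | nil => exact hne rfl
    | cons hadj p =>
      have : T.degree b ≠ 0 := by
        rw [← hdeg]
        exact Set.ncard_ne_zero_of_mem (by exact hadj) (Set.toFinite _)
      exact this hd0
  -- count leaves in B
  set LB := B.toFinset.filter (fun b => T.degree b = 1) with hLB
  have hsumlb : 2 * B.toFinset.card ≤ ∑ b ∈ B.toFinset, T.degree b + LB.card := by
    rw [hLB, Finset.card_filter, ← Finset.sum_add_distrib]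
    calc 2 * B.toFinset.card = ∑ _b ∈ B.toFinset, 2 := by
          rw [Finset.sum_const, smul_eq_mul, mul_comm]
      _ ≤ _ := by
          apply Finset.sum_le_sum
          intro b hb
          have := hdeg1 b (by simpa using hb)
          split_ifs <;> omega
  -- leaves in B are leaves of T
  have hLBle : LB.card ≤ {x : V | (T.neighborSet x).ncard = 1}.ncard := by
    rw [Set.ncard_eq_toFinset_card']
    apply Finset.card_le_card
    intro x hx
    rw [hLB, Finset.mem_filter] at hx
    rw [Set.mem_toFinset]
    show (T.neighborSet x).ncard = 1
    rw [hdeg]; exact hx.2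
  rw [hBf] at hsumlb
  omega
end

section
/- Let T be a spanning tree of a graph whose vertex set contains an independent set B with |B| = m + k, where the total number of vertices is 2m + k. Then T has at least k + 1 leaves lying in B; in particular T has more than k leaves. -/
/-!
Summing degrees over the independent set `B` counts every edge of `T` at most once, so the sum is
at most `2m + k - 1`. Every vertex of a tree on at least two vertices has degree at least one, and
a non-leaf at least two, so the sum is at least `2|B| - ℓ = 2m + 2k - ℓ`, where `ℓ` is the number
of leaves in `B`. Hence `ℓ ≥ k + 1`.
-/

open SimpleGraph Finset

namespace SimpleGraph

variable {V : Type*} [Fintype V] (G : SimpleGraph V) [DecidableRel G.Adj]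

theorem IsIndepSet.sum_degree_le_card_edgeFinset [DecidableEq V] {s : Finset V}
    (hs : G.IsIndepSet (s : Set V)) :
    ∑ x ∈ s, G.degree x ≤ #G.edgeFinset := by
  have hdisj : (s : Set V).PairwiseDisjoint fun x => G.incidenceFinset x := by
    intro x hx y hy hxy
    rw [Function.onFun, Finset.disjoint_left]
    intro e hex hey
    rw [mem_incidenceFinset] at hex hey
    exact hs hx hy hxy (G.adj_of_mem_incidenceSet hxy hex hey)
  calc ∑ x ∈ s, G.degree x = #(s.biUnion fun x => G.incidenceFinset x) := by
        simp only [card_biUnion hdisj, card_incidenceFinset_eq_degree]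
    _ ≤ #G.edgeFinset := card_le_card <| biUnion_subset.2 fun x _ e he =>
        mem_edgeFinset.2 ((G.mem_incidenceFinset x e).1 he).1

theorem two_mul_card_le_sum_degree_add_card_filter_degree_eq_one {s : Finset V}
    (hpos : ∀ x ∈ s, 0 < G.degree x) :
    2 * #s ≤ ∑ x ∈ s, G.degree x + #{x ∈ s | G.degree x = 1} := by
  rw [card_filter, ← sum_add_distrib, mul_comm, ← smul_eq_mul, ← sum_const]
  refine sum_le_sum fun x hx => ?_
  have := hpos x hx
  split_ifs <;> omega

end SimpleGraph

theorem stmt_4_general {V : Type*} [Fintype V] (T : SimpleGraph V) (m k : ℕ)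
    (hk : 2 ≤ k)
    (hT : T.IsTree) (hcard : Fintype.card V = 2 * m + k)
    (B : Set V) (hB : B.ncard = m + k)
    (hBindep : ∀ x ∈ B, ∀ y ∈ B, ¬T.Adj x y) :
    k + 1 ≤ {x ∈ B | (T.neighborSet x).ncard = 1}.ncard ∧
    k < {x : V | (T.neighborSet x).ncard = 1}.ncard := by
  classical
  obtain ⟨s, rfl⟩ := B.toFinite.exists_finset_coe
  have : Nontrivial V := Fintype.one_lt_card_iff_nontrivial.1 (by omega)
  have hncard (x : V) : (T.neighborSet x).ncard = T.degree x := by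
    rw [← Nat.card_coe_set_eq, Nat.card_eq_fintype_card, card_neighborSet_eq_degree]
  have hleaves : {x ∈ (s : Set V) | (T.neighborSet x).ncard = 1} = ↑{x ∈ s | T.degree x = 1} := by
    simp [hncard]
  rw [Set.ncard_coe_finset] at hB
  have hedges := hT.card_edgeFinset
  have hsum_le := IsIndepSet.sum_degree_le_card_edgeFinset T (s := s)
    fun x hx y hy _ => hBindep x hx y hy
  have hsum_ge := T.two_mul_card_le_sum_degree_add_card_filter_degree_eq_one (s := s)
    fun x _ => hT.connected.preconnected.degree_pos_of_nontrivial x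
  have hB_leaves : k + 1 ≤ {x ∈ (s : Set V) | (T.neighborSet x).ncard = 1}.ncard := by
    rw [hleaves, Set.ncard_coe_finset]
    omega
  exact ⟨hB_leaves, (Nat.lt_succ_self k).trans_le <| hB_leaves.trans <|
    Set.ncard_le_ncard fun x hx => hx.2⟩

theorem stmt_4 {V : Type*} [Fintype V] (T : SimpleGraph V) (m k : ℕ)
    (hm : 1 ≤ m) (hk : 2 ≤ k)
    (hT : T.IsTree) (hcard : Fintype.card V = 2 * m + k)
    (B : Set V) (hB : B.ncard = m + k)
    (hBindep : ∀ x ∈ B, ∀ y ∈ B, ¬T.Adj x y) :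
    k + 1 ≤ {x ∈ B | (T.neighborSet x).ncard = 1}.ncard ∧
    k < {x : V | (T.neighborSet x).ncard = 1}.ncard :=
  stmt_4_general T m k hk hT hcard B hB hBindep
end

section
/- Let G be a connected graph with σ₂(G) ≥ |V(G)| - k (k ≥ 2) that has no spanning tree with at most k leaves, and let P be a longest path in G. Then |V(G)| = |V(P)| + k - 1, and every vertex not on P has a neighbor on P. -/
/-!
Every acyclic `A ≤ G` extends to a spanning tree, whose leaves have degree at most one in `A`.
Taking `A = p` (with `ℓ` edges, `n = |V|`), the leaves are among the two ends of `p` and the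
`n - ℓ - 1` vertices off `p`, so `n ≥ ℓ + k` and some vertex lies off `p`. A cycle through exactly
the vertices of `p` could then be rotated to a vertex with a neighbour off `p`, giving a path
longer than `p`. So, as in Ore's theorem, `u ≁ v` and no `i` has `u ~ pᵢ₊₁` and `v ~ pᵢ`, whence
`n - k ≤ d(u) + d(v) ≤ ℓ`. Finally, a vertex with no neighbour on `p` yields a pendant path
`y z c` with `y, z` off `p` and `c` on `p`; adding it to `p` makes `z` an inner vertex, leaving at
most `n - ℓ = k` leaves.
-/

open SimpleGraph

/-- The degree of a vertex, as the cardinality of its neighbor set. -/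
noncomputable def SimpleGraph.deg' {V : Type*} (G : SimpleGraph V) (u : V) : ℕ :=
  (G.neighborSet u).ncard

lemma Set.ncard_pair_union_le {α : Type*} (a b : α) (s : Set α) :
    ({a, b} ∪ s).ncard ≤ s.ncard + 2 := by
  have := Set.ncard_insert_le a {b}
  rw [Set.ncard_singleton] at this
  have := Set.ncard_union_le {a, b} s
  omega

namespace SimpleGraph

variable {V : Type*} {G : SimpleGraph V}

lemma HasSpanningKEndedTree.mono {k l : ℕ} (h : G.HasSpanningKEndedTree k) (hkl : k ≤ l) :
    G.HasSpanningKEndedTree l :=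
  let ⟨T, hTG, hT, hleaves⟩ := h
  ⟨T, hTG, hT, hleaves.trans hkl⟩

lemma Connected.hasSpanningKEndedTree_of_isAcyclic [Finite V] {A : SimpleGraph V} {k : ℕ}
    (hG : G.Connected) (hAG : A ≤ G) (hA : A.IsAcyclic)
    (hk : {x | (A.neighborSet x).ncard ≤ 1}.ncard ≤ k) : G.HasSpanningKEndedTree k := by
  obtain ⟨T, hAT, hTG, hT⟩ := hG.exists_isTree_le_of_le_of_isAcyclic hAG hA
  refine ⟨T, hTG, hT, le_trans (Set.ncard_le_ncard (fun x hx => ?_) (Set.toFinite _)) hk⟩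
  exact (Set.ncard_le_ncard (neighborSet_mono hAT x) (Set.toFinite _)).trans hx.le

namespace Walk

variable {u v : V}

lemma neighborSet_spanningCoe_toSubgraph_eq_empty {p : G.Walk u v} {x : V}
    (hx : x ∉ p.support) : p.toSubgraph.spanningCoe.neighborSet x = ∅ :=
  Set.eq_empty_of_forall_notMem fun _ hy =>
    hx (p.mem_verts_toSubgraph.mp (Subgraph.Adj.fst_mem hy))

lemma IsPath.isAcyclic_spanningCoe_toSubgraph {p : G.Walk u v} (hp : p.IsPath) :
    p.toSubgraph.spanningCoe.IsAcyclic := by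
  induction p with
  | nil => exact isAcyclic_bot.anti fun x y h => by simp at h
  | @cons a b c h q ih =>
    rw [cons_isPath_iff] at hp
    rw [Walk.toSubgraph, Subgraph.sup_spanningCoe, Subgraph.spanningCoe_subgraphOfAdj, sup_comm]
    exact (ih hp.1).sup_edge_of_not_reachable
      (not_reachable_of_neighborSet_left_eq_empty h.ne
        (neighborSet_spanningCoe_toSubgraph_eq_empty hp.2))

lemma IsPath.mem_ends_or_notMem_support_of_ncard_neighborSet_le_one [Finite V]
    {p : G.Walk u v} (hp : p.IsPath) {A : SimpleGraph V} (hpA : p.toSubgraph.spanningCoe ≤ A)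
    {x : V} (hx : (A.neighborSet x).ncard ≤ 1) :
    x ∈ ({u, v} ∪ {x | x ∉ p.support} : Set V) := by
  by_contra hmem
  simp only [Set.mem_union, Set.mem_insert_iff, Set.mem_singleton_iff, Set.mem_ofPred_eq,
    not_or, not_not] at hmem
  obtain ⟨⟨hxu, hxv⟩, hxp⟩ := hmem
  obtain ⟨i, rfl, hi⟩ := mem_support_iff_exists_getVert.mp hxp
  have hi0 : i ≠ 0 := by rintro rfl; exact hxu (getVert_zero p)
  have hiL : i < p.length := lt_of_le_of_ne hi (by rintro rfl; exact hxv (getVert_length p))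
  have htwo := hp.ncard_neighborSet_toSubgraph_internal_eq_two hi0 hiL
  have hsub : p.toSubgraph.neighborSet (p.getVert i) ⊆ A.neighborSet (p.getVert i) :=
    fun y hy => hpA hy
  have := Set.ncard_le_ncard hsub (Set.toFinite _)
  omega

lemma IsPath.ncard_setOf_notMem_support_add [Fintype V] {p : G.Walk u v} (hp : p.IsPath) :
    {x | x ∉ p.support}.ncard + (p.length + 1) = Fintype.card V := by
  classical
  have h := Set.ncard_compl_add_ncard {x | x ∈ p.support}
  rwa [Set.compl_ofPred, ← List.coe_toFinset, Set.ncard_coe_finset,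
    List.toFinset_card_of_nodup hp.support_nodup, length_support, Nat.card_eq_fintype_card] at h

lemma IsPath.hasSpanningKEndedTree [Fintype V] {p : G.Walk u v} (hG : G.Connected)
    (hp : p.IsPath) : G.HasSpanningKEndedTree (Fintype.card V - p.length + 1) := by
  refine hG.hasSpanningKEndedTree_of_isAcyclic p.toSubgraph.spanningCoe_le
    hp.isAcyclic_spanningCoe_toSubgraph ?_
  have hout := hp.ncard_setOf_notMem_support_add
  calc _ ≤ ({u, v} ∪ {x | x ∉ p.support} : Set V).ncard :=
        Set.ncard_le_ncard
          (fun _ hx => hp.mem_ends_or_notMem_support_of_ncard_neighborSet_le_one le_rfl hx)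
          (Set.toFinite _)
    _ ≤ {x | x ∉ p.support}.ncard + 2 := Set.ncard_pair_union_le u v _
    _ ≤ _ := by omega

-- Leave the set of vertices that are off `p` and have no neighbour on `p`, along a walk to `u`.
lemma exists_adj_adj_of_forall_not_adj (hG : G.Connected) (p : G.Walk u v) {w : V}
    (hw : w ∉ p.support) (hfar : ∀ x ∈ p.support, ¬G.Adj w x) :
    ∃ y z c, G.Adj y z ∧ G.Adj z c ∧ y ∉ p.support ∧ z ∉ p.support ∧ c ∈ p.support := by
  obtain ⟨d, -, ⟨hy, hyfar⟩, hzS⟩ := (hG.preconnected w u).some.exists_boundary_dart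
    {x | x ∉ p.support ∧ ∀ c ∈ p.support, ¬G.Adj x c} ⟨hw, hfar⟩
    fun h => h.1 p.start_mem_support
  have hz : d.snd ∉ p.support := fun h => hyfar _ h d.adj
  obtain ⟨c, hc, hzc⟩ : ∃ c ∈ p.support, G.Adj d.snd c := by
    by_contra! h
    exact hzS ⟨hz, h⟩
  exact ⟨_, _, c, d.adj, hzc, hy, hz, hc⟩

lemma IsPath.hasSpanningKEndedTree_of_forall_not_adj [Fintype V] {p : G.Walk u v}
    (hG : G.Connected) (hp : p.IsPath) {w : V} (hw : w ∉ p.support)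
    (hfar : ∀ x ∈ p.support, ¬G.Adj w x) :
    G.HasSpanningKEndedTree (Fintype.card V - p.length) := by
  obtain ⟨y, z, c, hyz, hzc, hy, hz, hc⟩ := exists_adj_adj_of_forall_not_adj hG p hw hfar
  set P := p.toSubgraph.spanningCoe
  have hPy : (P ⊔ edge z c).neighborSet y = ∅ := by
    refine Set.eq_empty_of_forall_notMem fun x hx => ?_
    rcases hx with hx | hx
    · exact Set.notMem_empty x ((neighborSet_spanningCoe_toSubgraph_eq_empty hy).subset hx)
    · rw [edge_adj] at hx
      rcases hx with ⟨⟨rfl, -⟩ | ⟨rfl, -⟩, -⟩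
      · exact hyz.ne rfl
      · exact hy hc
  have hA : (P ⊔ edge z c ⊔ edge y z).IsAcyclic :=
    (hp.isAcyclic_spanningCoe_toSubgraph.sup_edge_of_not_reachable
      (not_reachable_of_neighborSet_left_eq_empty hzc.ne
        (neighborSet_spanningCoe_toSubgraph_eq_empty hz))).sup_edge_of_not_reachable
      (not_reachable_of_neighborSet_left_eq_empty hyz.ne hPy)
  refine hG.hasSpanningKEndedTree_of_isAcyclic (sup_le (sup_le p.toSubgraph.spanningCoe_le
    ((edge_le_iff G).mpr (.inr hzc))) ((edge_le_iff G).mpr (.inr hyz))) hA ?_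
  have hz2 : 2 ≤ ((P ⊔ edge z c ⊔ edge y z).neighborSet z).ncard := by
    have hcy : ({c, y} : Set V) ⊆ (P ⊔ edge z c ⊔ edge y z).neighborSet z := by
      rintro x (rfl | rfl) <;> simp [edge_adj, hzc.ne, hyz.ne']
    rw [← Set.ncard_pair (show c ≠ y by rintro rfl; exact hy hc)]
    exact Set.ncard_le_ncard hcy (Set.toFinite _)
  have hout := hp.ncard_setOf_notMem_support_add
  calc _ ≤ (({u, v} ∪ {x | x ∉ p.support}) \ {z} : Set V).ncard := by
        refine Set.ncard_le_ncard (fun x hx => ⟨?_, ?_⟩) (Set.toFinite _)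
        · exact hp.mem_ends_or_notMem_support_of_ncard_neighborSet_le_one
            (le_sup_left.trans le_sup_left) hx
        · rintro rfl
          exact (one_lt_two.trans_le hz2).not_ge hx
    _ = ({u, v} ∪ {x | x ∉ p.support} : Set V).ncard - 1 :=
        Set.ncard_sdiff_singleton_of_mem (.inr hz)
    _ ≤ _ := by have := Set.ncard_pair_union_le u v {x | x ∉ p.support}; omega

lemma ncard_neighborSet_add_ncard_neighborSet_le_length (p : G.Walk u v)
    (hu : G.neighborSet u ⊆ {x | x ∈ p.support}) (hv : G.neighborSet v ⊆ {x | x ∈ p.support})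
    (hcross : ∀ i < p.length, G.Adj u (p.getVert (i + 1)) → ¬G.Adj v (p.getVert i)) :
    (G.neighborSet u).ncard + (G.neighborSet v).ncard ≤ p.length := by
  classical
  set F₁ := (Finset.range p.length).filter fun i => G.Adj u (p.getVert (i + 1))
  set F₂ := (Finset.range p.length).filter fun i => G.Adj v (p.getVert i)
  have h₁ : G.neighborSet u ⊆ F₁.image fun i => p.getVert (i + 1) := by
    intro x hx
    obtain ⟨j, rfl, hj⟩ := mem_support_iff_exists_getVert.mp (hu hx)
    have hj0 : j ≠ 0 := by rintro rfl; simp at hx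
    refine Finset.mem_image.mpr
      ⟨j - 1, Finset.mem_filter.mpr ⟨Finset.mem_range.mpr (by omega), ?_⟩, ?_⟩ <;>
      rw [Nat.sub_add_cancel (Nat.pos_of_ne_zero hj0)]
    exact hx
  have h₂ : G.neighborSet v ⊆ F₂.image p.getVert := by
    intro x hx
    obtain ⟨j, rfl, hj⟩ := mem_support_iff_exists_getVert.mp (hv hx)
    have hjL : j ≠ p.length := by rintro rfl; simp at hx
    exact Finset.mem_image.mpr
      ⟨j, Finset.mem_filter.mpr ⟨Finset.mem_range.mpr (by omega), hx⟩, rfl⟩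
  have hdisj : Disjoint F₁ F₂ :=
    Finset.disjoint_filter.mpr fun i hi => hcross i (Finset.mem_range.mp hi)
  calc (G.neighborSet u).ncard + (G.neighborSet v).ncard ≤ F₁.card + F₂.card := by
        gcongr
        · exact (Set.ncard_le_ncard h₁ (Finset.finite_toSet _)).trans
            ((Set.ncard_coe_finset _).trans_le Finset.card_image_le)
        · exact (Set.ncard_le_ncard h₂ (Finset.finite_toSet _)).trans
            ((Set.ncard_coe_finset _).trans_le Finset.card_image_le)
    _ = (F₁ ∪ F₂).card := (Finset.card_union_of_disjoint hdisj).symm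
    _ ≤ (Finset.range p.length).card :=
        Finset.card_le_card
          (Finset.union_subset (Finset.filter_subset _ _) (Finset.filter_subset _ _))
    _ = p.length := Finset.card_range _

-- The witness is `pᵢ₊₁ → ⋯ → v → pᵢ → ⋯ → u`.
lemma exists_support_perm_of_adj_getVert (p : G.Walk u v) {i : ℕ} (hi : i < p.length)
    (hv : G.Adj v (p.getVert i)) :
    ∃ q : G.Walk (p.getVert (i + 1)) u, q.support.Perm p.support := by
  induction p generalizing i with
  | nil => simp at hi
  | @cons a b c h q ih =>
    match i with
    | 0 =>
      have hv' : G.Adj c a := by simpa using hv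
      refine ⟨(q.concat hv').copy (by simp) rfl, ?_⟩
      rw [support_copy, support_concat, support_cons]
      exact List.perm_append_singleton a q.support
    | i + 1 =>
      obtain ⟨q', hq'⟩ := ih (by simpa using hi) (by simpa [getVert_cons_succ] using hv)
      refine ⟨(q'.concat h.symm).copy (by simp [getVert_cons_succ]) rfl,
        (List.Perm.of_eq ((support_copy _ _ _).trans (support_concat _ _))).trans ?_⟩
      exact (List.perm_append_singleton a q'.support).trans (hq'.cons a)

-- Close `q` into a cycle by `hba`, rotate it to start at `y`, drop its first edge, append `w`.
lemma IsPath.exists_isPath_length_succ_of_adj {a b y w : V} {q : G.Walk a b} (hq : q.IsPath)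
    (hba : G.Adj b a) (hy : y ∈ q.support) (hyw : G.Adj y w) (hw : w ∉ q.support) :
    ∃ (x : V) (r : G.Walk x w), r.IsPath ∧ r.length = q.length + 1 := by
  classical
  have hyc : y ∈ (cons hba q).support := List.mem_cons_of_mem _ hy
  have hrot := support_rotate (cons hba q) y hyc
  have hlen := length_rotate (cons hba q) y hyc
  have hmem := fun x => mem_support_rotate_iff (cons hba q) (w := x) y hyc
  generalize (cons hba q).rotate y hyc = c at hrot hlen hmem
  cases c with
  | nil => simp at hlen
  | cons h r =>
    have hr : r.IsPath := (isPath_def r).mpr (hrot.perm.nodup_iff.mpr hq.support_nodup)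
    have hwr : w ∉ r.support := fun hwr => by
      rcases List.mem_cons.mp ((hmem w).mp (List.mem_cons_of_mem _ hwr)) with rfl | hwq
      exacts [hw q.end_mem_support, hw hwq]
    exact ⟨_, r.concat hyw, hr.concat hwr hyw, by simpa using hlen⟩

lemma IsPath.mem_support_of_adj_of_forall_length_le {p : G.Walk u v} (hp : p.IsPath)
    (hlongest : ∀ (a b : V) (q : G.Walk a b), q.IsPath → q.length ≤ p.length) {x : V}
    (hx : G.Adj u x) : x ∈ p.support := by
  by_contra hxp
  have := hlongest _ _ _ ((cons_isPath_iff hx.symm p).mpr ⟨hp, hxp⟩)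
  simp at this

lemma IsPath.not_adj_of_support_perm_of_forall_length_le {p : G.Walk u v} (hp : p.IsPath)
    (hG : G.Connected) (hlongest : ∀ (a b : V) (q : G.Walk a b), q.IsPath → q.length ≤ p.length)
    {w : V} (hw : w ∉ p.support) {a b : V} (q : G.Walk a b) (hq : q.support.Perm p.support) :
    ¬G.Adj b a := by
  intro hba
  have hqp : q.IsPath := (isPath_def q).mpr (hq.nodup_iff.mpr hp.support_nodup)
  have hlen : q.length = p.length := by simpa using hq.length_eq
  obtain ⟨d, -, hy, hw'⟩ := (hG.preconnected a w).some.exists_boundary_dart {x | x ∈ q.support}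
    q.start_mem_support fun h => hw (hq.mem_iff.mp h)
  obtain ⟨x, r, hr, hrlen⟩ := hqp.exists_isPath_length_succ_of_adj hba hy d.adj hw'
  have := hlongest _ _ r hr
  omega

lemma IsPath.ne_of_forall_length_le {p : G.Walk u v} (hp : p.IsPath) (hG : G.Connected)
    (hlongest : ∀ (a b : V) (q : G.Walk a b), q.IsPath → q.length ≤ p.length)
    {w : V} (hw : w ∉ p.support) : u ≠ v := by
  rintro rfl
  obtain rfl := eq_nil_iff_nil.mpr (isPath_iff_nil.mp hp)
  obtain ⟨x, hx⟩ := (hG.preconnected u w).nonempty_neighborSet_left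
    (by rintro rfl; exact hw (start_mem_support _))
  exact hx.ne (mem_support_nil_iff.mp (hp.mem_support_of_adj_of_forall_length_le hlongest hx)).symm

lemma IsPath.deg'_add_deg'_le_length {p : G.Walk u v} (hp : p.IsPath) (hG : G.Connected)
    (hlongest : ∀ (a b : V) (q : G.Walk a b), q.IsPath → q.length ≤ p.length)
    {w : V} (hw : w ∉ p.support) : G.deg' u + G.deg' v ≤ p.length := by
  refine p.ncard_neighborSet_add_ncard_neighborSet_le_length
    (fun x hx => hp.mem_support_of_adj_of_forall_length_le hlongest hx) (fun x hx => ?_)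
    fun i hi hu hv => ?_
  · simpa using hp.reverse.mem_support_of_adj_of_forall_length_le (by simpa using hlongest) hx
  · obtain ⟨q, hq⟩ := p.exists_support_perm_of_adj_getVert hi hv
    exact hp.not_adj_of_support_perm_of_forall_length_le hG hlongest hw q hq hu

end Walk

end SimpleGraph

theorem stmt_11 {V : Type*} [Fintype V] (G : SimpleGraph V) (k : ℕ) (hk : 2 ≤ k)
    (hconn : G.Connected)
    (hσ : ∀ u v : V, u ≠ v → ¬G.Adj u v →
      (Fintype.card V : ℤ) - k ≤ (G.deg' u : ℤ) + (G.deg' v : ℤ))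
    (hnotree : ¬G.HasSpanningKEndedTree k)
    (u v : V) (p : G.Walk u v) (hp : p.IsPath)
    (hlongest : ∀ (a b : V) (q : G.Walk a b), q.IsPath → q.length ≤ p.length) :
    Fintype.card V + 1 = p.support.length + k ∧
    ∀ w : V, w ∉ p.support → ∃ x ∈ p.support, G.Adj w x := by
  have hout := hp.ncard_setOf_notMem_support_add
  have hsupp := p.length_support
  have hlower : p.length + k ≤ Fintype.card V := by
    by_contra hlt
    exact hnotree ((hp.hasSpanningKEndedTree hconn).mono (by omega))
  obtain ⟨w, hw⟩ : ∃ w, w ∉ p.support := by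
    by_contra! h
    simp [h] at hout
    omega
  have hupper : (Fintype.card V : ℤ) - k ≤ p.length := by
    have huv := hp.ne_of_forall_length_le hconn hlongest hw
    have hvu := hp.not_adj_of_support_perm_of_forall_length_le hconn hlongest hw p (.refl _)
    exact (hσ u v huv fun h => hvu h.symm).trans
      (by exact_mod_cast hp.deg'_add_deg'_le_length hconn hlongest hw)
  refine ⟨by omega, fun w hw => ?_⟩
  by_contra! hfar
  exact hnotree (by simpa [show Fintype.card V - p.length = k by omega] using
    hp.hasSpanningKEndedTree_of_forall_not_adj hconn hw hfar)
end

section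
/- Let G be a connected graph with σ₂(G) ≥ |V(G)| - k (k ≥ 2) and no spanning tree with at most k leaves, let P be a longest path with endpoints u, v, and let x be a vertex of G not on P. Then N(x) is disjoint from N(u)⁻ (predecessors along P of neighbors of u), and in fact N(x) = N(v). -/
/-!
Write `p = p_0 ⋯ p_m`. Pósa rotations turn the longest path `p` into longest paths on the same
vertex set, none of which can be extended to `x`: so `x ≁ p_i` whenever `u ∼ p_{i+1}`, and
`u ∼ p_{i+1}`, `v ∼ p_i` never hold together (they would close a cycle through `V(p)`, which
connectivity would open into a longer path). Hence `deg u + deg v ≤ m`. A spanning tree through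
`p` has all its leaves among `u`, `v` and the `|V| - m - 1` vertices off `p`; having more than `k`
leaves, it forces `|V| ≥ m + k`, and then `σ₂` forces `deg u + deg v = m`: for every `i < m`
exactly one of `u ∼ p_{i+1}`, `v ∼ p_i` holds. The same leaf count for a tree through `p` and an
edge `xw` off `p` shows `N(x) ⊆ V(p)`, hence `N(x) ⊆ N(v)`, and `σ₂(u, x)` gives
`deg x ≥ deg v`.
-/

open SimpleGraph

namespace SimpleGraph

variable {V : Type*} {G : SimpleGraph V}

lemma Reachable.eq_of_forall_not_adj {a b : V} (h : G.Reachable a b) (ha : ∀ c, ¬G.Adj a c) :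
    a = b := by
  obtain ⟨W⟩ := h
  cases W with
  | nil => rfl
  | cons hadj _ => exact absurd hadj (ha _)

lemma Connected.eq_or_eq_of_adj_of_ncard_neighborSet_eq_one (hconn : G.Connected) {x w : V}
    (hxw : G.Adj x w) (hx : (G.neighborSet x).ncard = 1) (hw : (G.neighborSet w).ncard = 1)
    (y : V) : y = x ∨ y = w := by
  have hleaf : ∀ {a b : V}, G.Adj a b → (G.neighborSet a).ncard = 1 → G.neighborSet a ⊆ {b} := by
    intro a b hab ha
    obtain ⟨c, hc⟩ := Set.ncard_eq_one.1 ha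
    have hb : b ∈ G.neighborSet a := hab
    rw [hc] at hb ⊢
    rw [Set.mem_singleton_iff.1 hb]
  by_contra! hy
  obtain ⟨W⟩ := hconn.preconnected x y
  obtain ⟨d, -, hd, hd'⟩ := W.exists_boundary_dart {x, w} (by simp) (by simpa using hy)
  apply hd'
  rcases hd with h | h
  · exact Or.inr (hleaf hxw hx (h ▸ d.adj))
  · exact Or.inl (hleaf hxw.symm hw (Set.mem_singleton_iff.1 h ▸ d.adj))

namespace Walk

variable {u v : V}

lemma IsPath.of_support_perm {a b : V} {p : G.Walk u v} {q : G.Walk a b} (hp : p.IsPath)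
    (h : q.support.Perm p.support) : q.IsPath ∧ q.length = p.length :=
  ⟨IsPath.mk' (h.nodup_iff.2 hp.support_nodup), by
    simpa only [length_support, Nat.add_right_cancel_iff] using h.length_eq⟩

/-- Pósa rotation: the walk `p_i, …, p_0, p_{i+1}, …, p_m`. -/
lemma exists_support_perm_of_adj_getVert_succ (p : G.Walk u v) {i : ℕ} (hi : i < p.length)
    (h : G.Adj u (p.getVert (i + 1))) :
    ∃ q : G.Walk (p.getVert i) v, q.support.Perm p.support := by
  refine ⟨(p.take i).reverse.append (cons h (p.drop (i + 1))), ?_⟩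
  rw [support_append, support_reverse, support_cons, List.tail_cons, support_take,
    drop_support_eq_support_drop_min, min_eq_left hi]
  simpa only [List.take_append_drop] using
    (List.reverse_perm (p.support.take (i + 1))).append_right (p.support.drop (i + 1))

/-- The walk `p_j, …, p_m, p_0, …, p_{j-1}` around the cycle closed by the edge `vu`. -/
lemma exists_support_perm_of_adj_end_start (p : G.Walk u v) (h : G.Adj v u) {y : V}
    (hy : y ∈ p.support) : ∃ (c : V) (q : G.Walk y c), q.support.Perm p.support := by
  obtain ⟨j, rfl, hj⟩ := mem_support_iff_exists_getVert.1 hy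
  cases j with
  | zero => exact ⟨v, p.copy p.getVert_zero.symm rfl, by rw [support_copy]⟩
  | succ j =>
    refine ⟨_, (p.drop (j + 1)).append (cons h (p.take j)), ?_⟩
    rw [support_append, support_cons, List.tail_cons, support_take,
      drop_support_eq_support_drop_min, min_eq_left hj]
    simpa only [List.take_append_drop] using
      List.perm_append_comm (l₁ := p.support.drop (j + 1)) (l₂ := p.support.take (j + 1))

def IsLongestPath (p : G.Walk u v) : Prop :=
  p.IsPath ∧ ∀ {a b : V} (q : G.Walk a b), q.IsPath → q.length ≤ p.length

variable {p : G.Walk u v}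

lemma IsLongestPath.of_support_perm {a b : V} {q : G.Walk a b} (hP : p.IsLongestPath)
    (h : q.support.Perm p.support) : q.IsLongestPath := by
  obtain ⟨hq, hlen⟩ := hP.1.of_support_perm h
  exact ⟨hq, hlen ▸ hP.2⟩

lemma IsLongestPath.reverse (hP : p.IsLongestPath) : p.reverse.IsLongestPath :=
  hP.of_support_perm (by rw [support_reverse]; exact List.reverse_perm _)

lemma IsLongestPath.mem_support_of_adj_start (hP : p.IsLongestPath) {w : V} (h : G.Adj u w) :
    w ∈ p.support := by
  by_contra hw
  have := hP.2 _ (hP.1.cons hw (h := h.symm))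
  rw [length_cons] at this
  omega

lemma IsLongestPath.mem_support_of_adj_end (hP : p.IsLongestPath) {w : V} (h : G.Adj v w) :
    w ∈ p.support := by
  simpa using hP.reverse.mem_support_of_adj_start h

lemma IsLongestPath.start_ne_end (hconn : G.Connected) (hP : p.IsLongestPath) {x : V}
    (hx : x ∉ p.support) : u ≠ v := by
  rintro rfl
  obtain ⟨q, hq⟩ := hconn.exists_isPath u x
  have hq0 := hP.2 q hq
  rw [length_eq_zero_iff.2 (isPath_iff_nil.1 hP.1), Nat.le_zero] at hq0
  exact hx (eq_of_length_eq_zero hq0 ▸ p.start_mem_support)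

lemma IsLongestPath.not_adj_getVert_of_adj_start_getVert_succ (hP : p.IsLongestPath) {x : V}
    (hx : x ∉ p.support) {i : ℕ} (hi : i < p.length) (h : G.Adj u (p.getVert (i + 1))) :
    ¬G.Adj x (p.getVert i) := by
  obtain ⟨q, hq⟩ := p.exists_support_perm_of_adj_getVert_succ hi h
  exact fun hxi => hx (hq.mem_iff.1 ((hP.of_support_perm hq).mem_support_of_adj_start hxi.symm))

/-- Otherwise the cycle, entered at a vertex with a neighbour off `p`, yields a longer path. -/
lemma IsLongestPath.mem_support_of_adj_end_start (hconn : G.Connected)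
    (hP : p.IsLongestPath) (h : G.Adj v u) (w : V) : w ∈ p.support := by
  by_contra hw
  obtain ⟨W⟩ := hconn.preconnected u w
  obtain ⟨d, -, hy, hz⟩ := W.exists_boundary_dart {y | y ∈ p.support} p.start_mem_support hw
  obtain ⟨c, q, hq⟩ := p.exists_support_perm_of_adj_end_start h hy
  exact hz (hq.mem_iff.1 ((hP.of_support_perm hq).mem_support_of_adj_start d.adj))

lemma IsLongestPath.not_adj_start_getVert_succ_and_adj_end_getVert (hconn : G.Connected)
    (hP : p.IsLongestPath) {x : V} (hx : x ∉ p.support) {i : ℕ} (hi : i < p.length) :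
    ¬(G.Adj u (p.getVert (i + 1)) ∧ G.Adj v (p.getVert i)) := by
  rintro ⟨hu, hv⟩
  obtain ⟨q, hq⟩ := p.exists_support_perm_of_adj_getVert_succ hi hu
  exact hx (hq.mem_iff.1 ((hP.of_support_perm hq).mem_support_of_adj_end_start hconn hv x))

lemma not_adj_spanningCoe_toSubgraph_of_notMem (p : G.Walk u v) {x : V} (hx : x ∉ p.support)
    (y : V) : ¬p.toSubgraph.spanningCoe.Adj x y :=
  fun h => hx ((mem_verts_toSubgraph p).1 (p.toSubgraph.edge_vert h))

lemma IsPath.isAcyclic_spanningCoe_toSubgraph_s13 (hp : p.IsPath) :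
    p.toSubgraph.spanningCoe.IsAcyclic := by
  induction p with
  | nil => exact isAcyclic_bot.anti fun _ _ h => h
  | @cons a b _ h q ih =>
    rw [cons_isPath_iff] at hp
    rw [Walk.toSubgraph, Subgraph.sup_spanningCoe, Subgraph.spanningCoe_subgraphOfAdj, sup_comm]
    exact (ih hp.1).sup_edge_of_not_reachable fun hr =>
      h.ne (hr.eq_of_forall_not_adj (q.not_adj_spanningCoe_toSubgraph_of_notMem hp.2))

lemma IsPath.two_le_ncard_neighborSet [Finite V] {T : SimpleGraph V} (hp : p.IsPath)
    (hT : p.toSubgraph.spanningCoe ≤ T) {w : V} (hw : w ∈ p.support) (hwu : w ≠ u)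
    (hwv : w ≠ v) : 2 ≤ (T.neighborSet w).ncard := by
  obtain ⟨j, rfl, hj⟩ := mem_support_iff_exists_getVert.1 hw
  obtain ⟨i, rfl⟩ : ∃ i, j = i + 1 :=
    Nat.exists_eq_add_one.2 (Nat.pos_of_ne_zero fun h => hwu (h ▸ p.getVert_zero))
  have hi : i + 1 < p.length := lt_of_le_of_ne hj fun h => hwv (h ▸ p.getVert_length)
  have hne : p.getVert i ≠ p.getVert (i + 1 + 1) := fun h => by
    have := hp.getVert_injOn (by simp only [Set.mem_ofPred_eq]; omega)
      (by simp only [Set.mem_ofPred_eq]; omega) h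
    omega
  rw [← Set.ncard_pair hne]
  exact Set.ncard_le_ncard (Set.pair_subset (hT (p.toSubgraph_adj_getVert (by omega))).symm
    (hT (p.toSubgraph_adj_getVert hi)))

lemma IsPath.ncard_leaves_le [Finite V] {T : SimpleGraph V} (hp : p.IsPath)
    (hT : p.toSubgraph.spanningCoe ≤ T) :
    {z | (T.neighborSet z).ncard = 1}.ncard ≤
      {z | z ∉ p.support ∧ (T.neighborSet z).ncard = 1}.ncard + 2 := by
  have hsub : {z | (T.neighborSet z).ncard = 1} ⊆
      insert u (insert v {z | z ∉ p.support ∧ (T.neighborSet z).ncard = 1}) := by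
    intro z hz
    by_cases hzu : z = u
    · exact Or.inl hzu
    by_cases hzv : z = v
    · exact Or.inr (Or.inl hzv)
    refine Or.inr (Or.inr ⟨fun hzp => ?_, hz⟩)
    have := hp.two_le_ncard_neighborSet hT hzp hzu hzv
    rw [show (T.neighborSet z).ncard = 1 from hz] at this
    omega
  exact (Set.ncard_le_ncard hsub).trans
    ((Set.ncard_insert_le _ _).trans (Nat.add_le_add_right (Set.ncard_insert_le _ _) 1))

lemma IsPath.ncard_notMem_support_add [Fintype V] (hp : p.IsPath) :
    {z | z ∉ p.support}.ncard + (p.length + 1) = Fintype.card V := by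
  classical
  have hsupp : {z | z ∈ p.support}.ncard = p.length + 1 := by
    rw [← List.coe_toFinset, Set.ncard_coe_finset, List.toFinset_card_of_nodup hp.support_nodup,
      length_support]
  rw [← hsupp, add_comm, ← Nat.card_eq_fintype_card]
  exact Set.ncard_add_ncard_compl _

lemma IsPath.add_length_le_card [Fintype V] {k : ℕ} (hconn : G.Connected) (hp : p.IsPath)
    (hk : ¬G.HasSpanningKEndedTree k) : k + p.length ≤ Fintype.card V := by
  obtain ⟨T, hpT, hTG, hT⟩ := hconn.exists_isTree_le_of_le_of_isAcyclic
    p.toSubgraph.spanningCoe_le hp.isAcyclic_spanningCoe_toSubgraph_s13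
  have hleaves := hp.ncard_leaves_le hpT
  have hout : {z | z ∉ p.support ∧ (T.neighborSet z).ncard = 1}.ncard ≤
      {z | z ∉ p.support}.ncard := Set.ncard_le_ncard fun _ hz => hz.1
  have hcard := hp.ncard_notMem_support_add
  have hmany : k < {z | (T.neighborSet z).ncard = 1}.ncard :=
    not_le.1 fun h => hk ⟨T, hTG, hT, h⟩
  omega

/-- Otherwise `x` or `w` is a non-leaf off `p` in a spanning tree through `p` and `xw`. -/
lemma IsPath.mem_support_of_adj_of_notMem [Fintype V] {k : ℕ} (hconn : G.Connected)
    (hp : p.IsPath) (hk : ¬G.HasSpanningKEndedTree k) (hcard : Fintype.card V ≤ k + p.length)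
    {x w : V} (hx : x ∉ p.support) (hxw : G.Adj x w) : w ∈ p.support := by
  by_contra hw
  have hH : (p.toSubgraph.spanningCoe ⊔ edge x w).IsAcyclic :=
    hp.isAcyclic_spanningCoe_toSubgraph_s13.sup_edge_of_not_reachable fun hr =>
      hxw.ne (hr.eq_of_forall_not_adj (p.not_adj_spanningCoe_toSubgraph_of_notMem hx))
  obtain ⟨T, hHT, hTG, hT⟩ := hconn.exists_isTree_le_of_le_of_isAcyclic
    (sup_le p.toSubgraph.spanningCoe_le ((edge_le_iff G).2 (Or.inr hxw))) hH
  have hxwT : T.Adj x w := hHT (Or.inr ((edge_adj (s := x) (t := w) x w).2 ⟨Or.inl ⟨rfl, rfl⟩, hxw.ne⟩))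
  obtain ⟨c, hc, hcl⟩ : ∃ c ∉ p.support, (T.neighborSet c).ncard ≠ 1 := by
    by_contra! h
    rcases hT.connected.eq_or_eq_of_adj_of_ncard_neighborSet_eq_one hxwT (h x hx) (h w hw) u
      with rfl | rfl
    exacts [hx p.start_mem_support, hw p.start_mem_support]
  have hleaves := hp.ncard_leaves_le (le_sup_left.trans hHT)
  have hout : {z | z ∉ p.support ∧ (T.neighborSet z).ncard = 1}.ncard + 1 ≤
      {z | z ∉ p.support}.ncard := by
    rw [← Set.ncard_sdiff_singleton_add_one (s := {z | z ∉ p.support}) hc]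
    refine Nat.add_le_add_right (Set.ncard_le_ncard (t := {z | z ∉ p.support} \ {c}) ?_) 1
    exact fun z hz => ⟨hz.1, fun h => hcl (Set.mem_singleton_iff.1 h ▸ hz.2)⟩
  have hcard' := hp.ncard_notMem_support_add
  exact hk ⟨T, hTG, hT, by omega⟩

open Finset in
lemma IsPath.ncard_eq_card_filter_range (hp : p.IsPath) {s : Set V} [DecidablePred (· ∈ s)]
    (hs : ∀ w ∈ s, w ∈ p.support) :
    s.ncard = #{i ∈ range (p.length + 1) | p.getVert i ∈ s} := by
  classical
  have hs' : s = ↑({i ∈ range (p.length + 1) | p.getVert i ∈ s}.image p.getVert) := by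
    ext w
    simp only [coe_image, coe_filter, mem_range, Set.mem_image, Set.mem_ofPred_eq]
    refine ⟨fun hw => ?_, fun ⟨i, ⟨_, hi⟩, hiw⟩ => hiw ▸ hi⟩
    obtain ⟨i, rfl, hi⟩ := mem_support_iff_exists_getVert.1 (hs w hw)
    exact ⟨i, ⟨Nat.lt_succ_of_le hi, hw⟩, rfl⟩
  conv_lhs => rw [hs']
  rw [Set.ncard_coe_finset, card_image_of_injOn]
  exact hp.getVert_injOn.mono fun i hi => Nat.le_of_lt_succ (mem_range.1 (mem_filter.1 hi).1)

variable [DecidableRel G.Adj]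

open Finset in
lemma IsLongestPath.deg'_start (hP : p.IsLongestPath) :
    G.deg' u = #{i ∈ range p.length | G.Adj u (p.getVert (i + 1))} := by
  rw [deg', hP.1.ncard_eq_card_filter_range (s := G.neighborSet u) fun _ => hP.mem_support_of_adj_start, card_filter,
    card_filter, sum_range_succ']
  simp

open Finset in
lemma IsLongestPath.deg'_end (hP : p.IsLongestPath) :
    G.deg' v = #{i ∈ range p.length | G.Adj v (p.getVert i)} := by
  rw [deg', hP.1.ncard_eq_card_filter_range (s := G.neighborSet v) fun _ => hP.mem_support_of_adj_end, card_filter,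
    card_filter, sum_range_succ]
  simp

open Finset in
lemma IsLongestPath.deg'_add_deg'_eq_card_union (hconn : G.Connected) (hP : p.IsLongestPath)
    {x : V} (hx : x ∉ p.support) :
    G.deg' u + G.deg' v = #({i ∈ range p.length | G.Adj u (p.getVert (i + 1))} ∪
      {i ∈ range p.length | G.Adj v (p.getVert i)}) := by
  rw [card_union_of_disjoint, hP.deg'_start, hP.deg'_end]
  refine Finset.disjoint_left.2 fun i hu hv => ?_
  rw [mem_filter, mem_range] at hu hv
  exact hP.not_adj_start_getVert_succ_and_adj_end_getVert hconn hx hu.1 ⟨hu.2, hv.2⟩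

open Finset in
lemma IsLongestPath.deg'_add_deg'_le_length (hconn : G.Connected) (hP : p.IsLongestPath)
    {x : V} (hx : x ∉ p.support) : G.deg' u + G.deg' v ≤ p.length := by
  rw [hP.deg'_add_deg'_eq_card_union hconn hx]
  exact (card_le_card (union_subset (filter_subset _ _) (filter_subset _ _))).trans_eq
    (card_range _)

open Finset in
lemma IsLongestPath.adj_end_getVert_of_not_adj_start_getVert_succ (hconn : G.Connected)
    (hP : p.IsLongestPath) {x : V} (hx : x ∉ p.support)
    (hdeg : p.length ≤ G.deg' u + G.deg' v) {i : ℕ} (hi : i < p.length)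
    (hu : ¬G.Adj u (p.getVert (i + 1))) : G.Adj v (p.getVert i) := by
  have hunion := eq_of_subset_of_card_le (union_subset (filter_subset _ _) (filter_subset _ _))
    (by rwa [card_range, ← hP.deg'_add_deg'_eq_card_union hconn hx])
  have hi' := hunion ▸ mem_range.2 hi
  simpa [hi, hu] using hi'

end Walk

end SimpleGraph

theorem stmt_13_general {V : Type*} [Fintype V] (G : SimpleGraph V) (k : ℕ)
    (hconn : G.Connected)
    (hσ : ∀ u v : V, u ≠ v → ¬G.Adj u v →
      (Fintype.card V : ℤ) - k ≤ (G.deg' u : ℤ) + (G.deg' v : ℤ))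
    (hnotree : ¬G.HasSpanningKEndedTree k)
    (u v : V) (p : G.Walk u v) (hp : p.IsPath)
    (hlongest : ∀ (a b : V) (q : G.Walk a b), q.IsPath → q.length ≤ p.length)
    (x : V) (hx : x ∉ p.support) :
    (∀ i : ℕ, (h : i + 1 < p.support.length) →
      G.Adj u (p.support[i + 1]'h) →
      ¬G.Adj x (p.support[i]'(Nat.lt_of_succ_lt h))) ∧
    G.neighborSet x = G.neighborSet v := by
  classical
  have hP : p.IsLongestPath := ⟨hp, hlongest _ _⟩
  have hposa : ∀ i < p.length, G.Adj u (p.getVert (i + 1)) → ¬G.Adj x (p.getVert i) :=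
    fun i hi => hP.not_adj_getVert_of_adj_start_getVert_succ hx hi
  refine ⟨fun i h => ?_, ?_⟩
  · simp only [Walk.support_getElem_eq_getVert]
    exact hposa i (by rw [Walk.length_support] at h; omega)
  have hσuv := hσ u v (hP.start_ne_end hconn hx) fun h =>
    hx (hP.mem_support_of_adj_end_start hconn h.symm x)
  have hσux := hσ u x (fun h => hx (h ▸ p.start_mem_support)) fun h =>
    hx (hP.mem_support_of_adj_start h)
  have hdeg := hP.deg'_add_deg'_le_length hconn hx
  have hcard := hp.add_length_le_card hconn hnotree
  have hxv : ¬G.Adj x v := fun h => hx (hP.mem_support_of_adj_end h.symm)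
  have hsub : G.neighborSet x ⊆ G.neighborSet v := by
    intro t ht
    obtain ⟨j, rfl, hj⟩ := Walk.mem_support_iff_exists_getVert.1
      (hp.mem_support_of_adj_of_notMem hconn hnotree (by omega) hx ht)
    have hjm : j < p.length := lt_of_le_of_ne hj fun h => hxv (by rwa [h, p.getVert_length] at ht)
    exact hP.adj_end_getVert_of_not_adj_start_getVert_succ hconn hx (by omega) hjm
      fun hu => hposa j hjm hu ht
  exact Set.eq_of_subset_of_ncard_le hsub (by omega : G.deg' v ≤ G.deg' x)

theorem stmt_13 {V : Type*} [Fintype V] (G : SimpleGraph V) (k : ℕ) (hk : 2 ≤ k)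
    (hconn : G.Connected)
    (hσ : ∀ u v : V, u ≠ v → ¬G.Adj u v →
      (Fintype.card V : ℤ) - k ≤ (G.deg' u : ℤ) + (G.deg' v : ℤ))
    (hnotree : ¬G.HasSpanningKEndedTree k)
    (u v : V) (p : G.Walk u v) (hp : p.IsPath)
    (hlongest : ∀ (a b : V) (q : G.Walk a b), q.IsPath → q.length ≤ p.length)
    (x : V) (hx : x ∉ p.support) :
    (∀ i : ℕ, (h : i + 1 < p.support.length) →
      G.Adj u (p.support[i + 1]'h) →
      ¬G.Adj x (p.support[i]'(Nat.lt_of_succ_lt h))) ∧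
    G.neighborSet x = G.neighborSet v :=
  stmt_13_general G k hconn hσ hnotree u v p hp hlongest x hx
end

section
/- Let G be a connected graph with σ₂(G) ≥ |V(G)| - k (k ≥ 2) and no spanning tree with at most k leaves, let P = z₀z₁…z_{2m} be a longest path with z₀ = u, z_{2m} = v, and suppose N(u) = N(v) = {z_{2j+1} : 0 ≤ j ≤ m-1}. Then the set {z_{2j} : 0 ≤ j ≤ m-1} of even-indexed vertices (excluding v) is an independent set in G. -/
open SimpleGraph

/-! If `z₀ ~ z_{2i+1}`, `z_{2i} ~ z_{2j}` and `z_{2j-1} ~ z_{2m}` on the path `z₀ … z_{2m}`,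
then replacing the path edges `z_{2i} z_{2i+1}` and `z_{2j-1} z_{2j}` by these three chords
closes the path into a cycle through all of its vertices. A cycle through all vertices of a
longest path in a connected graph is Hamiltonian, since an edge leaving it would extend the
cycle, opened at that edge, to a longer path. So the path itself is Hamiltonian, and a
Hamiltonian path is a spanning tree with two leaves. -/

theorem Cycle.chain_reverse_append_append_reverse {α : Type*} {r : α → α → Prop} [Std.Symm r]
    {A B D : List α} (hA : A ≠ []) (hB : B ≠ []) (hD : D ≠ [])
    (hAc : A.IsChain r) (hBc : B.IsChain r) (hDc : D.IsChain r)
    (hAB : ∀ a ∈ A.head?, ∀ b ∈ B.head?, r a b)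
    (hBD : ∀ b ∈ B.getLast?, ∀ d ∈ D.getLast?, r b d)
    (hDA : ∀ d ∈ D.head?, ∀ a ∈ A.getLast?, r d a) :
    Cycle.Chain r (A.reverse ++ B ++ D.reverse : List α) := by
  obtain ⟨b, B, rfl⟩ := List.exists_cons_of_ne_nil hB
  have hrot : (A.reverse ++ b :: B ++ D.reverse : Cycle α) =
      (b :: (B ++ D.reverse ++ A.reverse) : List α) :=
    Cycle.coe_eq_coe.mpr <| by
      simpa using List.isRotated_append (l := A.reverse) (l' := b :: B ++ D.reverse)
  rw [hrot, Cycle.chain_coe_cons, ← List.cons_append, ← List.cons_append, ← List.cons_append]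
  simp only [List.isChain_append, List.isChain_reverse,
    List.getLast?_append_of_ne_nil _ (List.reverse_ne_nil_iff.mpr hD),
    List.getLast?_append_of_ne_nil _ (List.reverse_ne_nil_iff.mpr hA), List.getLast?_reverse,
    List.head?_reverse]
  have hswap {l : List α} (h : l.IsChain r) : l.IsChain (fun a b => r b a) :=
    h.imp fun _ _ => Std.Symm.symm _ _
  exact ⟨⟨⟨hBc, hswap hDc, hBD⟩, hswap hAc, hDA⟩, List.isChain_singleton b,
    by simpa using hAB⟩

theorem List.exists_cycle_chain_perm_of_crossing {α : Type*} {r : α → α → Prop} [Std.Symm r]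
    {l : List α} (hl : l.IsChain r) {a b : ℕ} (hab : a < b) (hb : b + 1 < l.length)
    (h₁ : r l[0] l[a + 1]) (h₂ : r l[a] l[b + 1]) (h₃ : r l[b] l[l.length - 1]) :
    ∃ c : List α, Cycle.Chain r c ∧ c.Perm l := by
  set A := l.take (a + 1)
  set B := (l.drop (a + 1)).take (b - a)
  set D := l.drop (b + 1)
  have hsplit : A ++ B ++ D = l := by
    have hD : D = (l.drop (a + 1)).drop (b - a) := by
      rw [List.drop_drop, show a + 1 + (b - a) = b + 1 by omega]
    rw [List.append_assoc, hD, List.take_append_drop, List.take_append_drop]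
  have hA0 : A.head? = some l[0] := by simp [A, List.head?_eq_getElem?]
  have hAl : A.getLast? = some l[a] := by simp [A, List.getLast?_take]
  have hB0 : B.head? = some l[a + 1] := by simp [B, List.head?_take]; omega
  have hBl : B.getLast? = some l[b] := by simp [B, List.getLast?_take]; grind
  have hD0 : D.head? = some l[b + 1] := by simp [D]
  have hDl : D.getLast? = some l[l.length - 1] := by
    rw [List.getLast?_drop, if_neg (by omega), List.getLast?_eq_getElem?, List.getElem?_eq_getElem]
  refine ⟨A.reverse ++ B ++ D.reverse, Cycle.chain_reverse_append_append_reverse ?_ ?_ ?_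
    (hl.take _) ((hl.drop _).take _) (hl.drop _) (by simpa [hA0, hB0]) (by simpa [hBl, hDl])
    (by simpa [hD0, hAl] using Std.Symm.symm _ _ h₂), ?_⟩
  · exact List.ne_nil_of_length_pos (by simp [A]; omega)
  · exact List.ne_nil_of_length_pos (by simp [B]; omega)
  · exact List.ne_nil_of_length_pos (by simp [D]; omega)
  · rw [← hsplit]
    exact ((List.reverse_perm A).append (List.Perm.refl B)).append (List.reverse_perm D)

namespace SimpleGraph

variable {V : Type*} {G : SimpleGraph V}

theorem exists_walk_support_eq_of_isChain :
    ∀ {a : V} {l : List V}, (a :: l).IsChain G.Adj →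
      ∃ b, ∃ q : G.Walk a b, q.support = a :: l
  | a, [], _ => ⟨a, .nil, rfl⟩
  | _, _ :: _, h => by
    rw [List.isChain_cons_cons] at h
    obtain ⟨b, q, hq⟩ := exists_walk_support_eq_of_isChain h.2
    exact ⟨b, .cons h.1 q, by simp [hq]⟩

theorem exists_isPath_length_eq_of_cycle_chain {c : List V} (hc : Cycle.Chain G.Adj c)
    (hnd : c.Nodup) {x y : V} (hx : x ∈ c) (hy : y ∉ c) (hxy : G.Adj x y) :
    ∃ (a b : V) (q : G.Walk a b), q.IsPath ∧ q.length = c.length := by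
  obtain ⟨s, t, rfl⟩ := List.append_of_mem hx
  have hperm : List.Perm (x :: (t ++ s)) (s ++ x :: t) := by
    simpa using List.perm_append_comm (l₁ := x :: t) (l₂ := s)
  rw [show (s ++ x :: t : Cycle V) = (x :: (t ++ s) : List V) from
    Cycle.coe_eq_coe.mpr (by simpa using List.isRotated_append (l := s) (l' := x :: t)),
    Cycle.chain_coe_cons, ← List.cons_append] at hc
  obtain ⟨b, q, hq⟩ := exists_walk_support_eq_of_isChain (hc.left_of_append.cons_cons hxy.symm)
  refine ⟨y, b, q, ?_, ?_⟩
  · rw [Walk.isPath_def, hq]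
    exact List.nodup_cons.mpr ⟨fun h => hy (hperm.subset h), hperm.nodup_iff.mpr hnd⟩
  · have := congrArg List.length hq
    simp only [Walk.length_support, List.length_cons, List.length_append] at this ⊢
    omega

theorem Walk.IsPath.isHamiltonian_of_cycle_chain [DecidableEq V] (hconn : G.Connected)
    {u v : V} {p : G.Walk u v} (hp : p.IsPath)
    (hlongest : ∀ (a b : V) (q : G.Walk a b), q.IsPath → q.length ≤ p.length)
    {c : List V} (hc : Cycle.Chain G.Adj c) (hperm : c.Perm p.support) : p.IsHamiltonian := by
  refine hp.isHamiltonian_iff.mpr fun w => by_contra fun hw => ?_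
  obtain ⟨d, -, hd, hd'⟩ :=
    (hconn u w).some.exists_boundary_dart {x | x ∈ p.support} p.start_mem_support hw
  obtain ⟨a, b, q, hq, hlen⟩ := exists_isPath_length_eq_of_cycle_chain hc
    (hperm.nodup_iff.mpr hp.support_nodup) (hperm.mem_iff.mpr hd)
    (fun h => hd' (hperm.mem_iff.mp h)) d.adj
  have := hlongest a b q hq
  rw [hlen, hperm.length_eq, Walk.length_support] at this
  omega

theorem Walk.IsHamiltonian.hasSpanningKEndedTree [DecidableEq V] {u v : V} {p : G.Walk u v}
    (hp : p.IsHamiltonian) {k : ℕ} (hk : 2 ≤ k) : G.HasSpanningKEndedTree k := by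
  have := hp.finite
  have hpath := hp.isPath
  set T := p.toSubgraph.spanningCoe
  have hedges : ∀ e ∈ p.edges, e ∈ T.edgeSet := fun e he => by
    rw [Subgraph.edgeSet_spanningCoe, Walk.edgeSet_toSubgraph]; exact he
  have hconn : T.Connected := (connected_iff_exists_forall_reachable T).mpr ⟨u, fun x =>
    ⟨(p.takeUntil x (hp.mem_support x)).transfer T fun e he =>
      hedges e (p.edges_takeUntil_subset_edges _ he)⟩⟩
  have hcard : Nat.card T.edgeSet + 1 = Nat.card V := by
    have := Fintype.ofFinite V
    rw [Subgraph.edgeSet_spanningCoe, Walk.edgeSet_toSubgraph, Walk.edgeSet, ← List.coe_toFinset,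
      Nat.card_coe_set_eq, Set.ncard_coe_finset,
      List.toFinset_card_of_nodup hpath.isTrail.edges_nodup, Walk.length_edges,
      Nat.card_eq_fintype_card, ← hp.length_support, Walk.length_support]
  have hleaves : {x | (T.neighborSet x).ncard = 1} ⊆ {u, v} := by
    intro x hx
    obtain ⟨i, rfl, hi⟩ := Walk.mem_support_iff_exists_getVert.mp (hp.mem_support x)
    refine by_contra fun hend => ?_
    have hi0 : i ≠ 0 := by rintro rfl; simp at hend
    have hil : i ≠ p.length := by rintro rfl; simp at hend
    have := hpath.ncard_neighborSet_toSubgraph_internal_eq_two hi0 (lt_of_le_of_ne hi hil)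
    exact absurd (hx.symm.trans this) (by norm_num)
  refine ⟨T, p.toSubgraph.spanningCoe_le,
    isTree_iff_connected_and_card.mpr ⟨hconn, hcard⟩, ?_⟩
  calc _ ≤ ({u, v} : Set V).ncard := Set.ncard_le_ncard hleaves
    _ ≤ ({v} : Set V).ncard + 1 := Set.ncard_insert_le u {v}
    _ = 2 := by rw [Set.ncard_singleton]
    _ ≤ k := hk

end SimpleGraph

theorem stmt_16_general {V : Type*} (G : SimpleGraph V) (k : ℕ) (hk : 2 ≤ k)
    (hconn : G.Connected)
    (hnotree : ¬G.HasSpanningKEndedTree k)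
    (u v : V) (p : G.Walk u v) (hp : p.IsPath)
    (hlongest : ∀ (a b : V) (q : G.Walk a b), q.IsPath → q.length ≤ p.length)
    (m : ℕ)
    (hNu : G.neighborSet u = G.neighborSet v)
    (hNv : G.neighborSet v =
      {x : V | ∃ j : ℕ, j < m ∧ ∃ h : 2 * j + 1 < p.support.length,
        x = p.support[2 * j + 1]'h}) :
    ∀ i j : ℕ, i < m → j < m → (hi : 2 * i < p.support.length) →
      (hj : 2 * j < p.support.length) →
      ¬G.Adj (p.support[2 * i]'hi) (p.support[2 * j]'hj) := by
  classical
  have : Std.Symm G.Adj := ⟨fun _ _ h => h.symm⟩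
  have hodd (l : ℕ) (hl : l < m) (h : 2 * l + 1 < p.support.length) :
      G.Adj v p.support[2 * l + 1] ∧ G.Adj u p.support[2 * l + 1] :=
    have hv : p.support[2 * l + 1] ∈ G.neighborSet v := hNv ▸ ⟨l, hl, h, rfl⟩
    ⟨hv, (hNu ▸ hv : p.support[2 * l + 1] ∈ G.neighborSet u)⟩
  intro i j hi hj hi' hj' hadj
  wlog hij : i < j generalizing i j
  · obtain rfl | hji := eq_or_lt_of_le (not_lt.mp hij)
    · exact G.loopless.irrefl _ hadj
    · exact this j i hj hi hj' hi' hadj.symm hji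
  obtain ⟨c, hc, hperm⟩ := List.exists_cycle_chain_perm_of_crossing p.isChain_adj_support
    (a := 2 * i) (b := 2 * j - 1) (by omega) (by omega)
    (by simpa [Walk.support_getElem_zero] using (hodd i hi (by omega)).2)
    (by simpa [show 2 * j - 1 + 1 = 2 * j by omega] using hadj)
    (by simpa [show 2 * (j - 1) + 1 = 2 * j - 1 by omega, ← List.getLast_eq_getElem]
      using (hodd (j - 1) (by omega) (by omega)).1.symm)
  exact hnotree ((hp.isHamiltonian_of_cycle_chain hconn hlongest hc hperm).hasSpanningKEndedTree hk)

theorem stmt_16 {V : Type*} [Fintype V] (G : SimpleGraph V) (k : ℕ) (hk : 2 ≤ k)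
    (hconn : G.Connected)
    (hσ : ∀ u v : V, u ≠ v → ¬G.Adj u v →
      (Fintype.card V : ℤ) - k ≤ (G.deg' u : ℤ) + (G.deg' v : ℤ))
    (hnotree : ¬G.HasSpanningKEndedTree k)
    (u v : V) (p : G.Walk u v) (hp : p.IsPath)
    (hlongest : ∀ (a b : V) (q : G.Walk a b), q.IsPath → q.length ≤ p.length)
    (m : ℕ) (hlen : p.support.length = 2 * m + 1)
    (hNu : G.neighborSet u = G.neighborSet v)
    (hNv : G.neighborSet v =
      {x : V | ∃ j : ℕ, j < m ∧ ∃ h : 2 * j + 1 < p.support.length,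
        x = p.support[2 * j + 1]'h}) :
    ∀ i j : ℕ, i < m → j < m → (hi : 2 * i < p.support.length) →
      (hj : 2 * j < p.support.length) →
      ¬G.Adj (p.support[2 * i]'hi) (p.support[2 * j]'hj) :=
  stmt_16_general G k hk hconn hnotree u v p hp hlongest m hNu hNv
end
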